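/- arXiv:1902.02913 — 10 statements merged into one kernel-verified Lean document; each statement's English description precedes it below -/
import Mathlib

section
/- Let G be a group of ordered type with respect to 𝒟, with a level function lv. Let A, B ∈ 𝒟 with lv(A) = γ and lv(B) = δ, and suppose A ∪ B ∉ 𝒟. Then A ∪ B has level min{γ, δ}; that is, the set {lv(D) : D ∈ 𝒟, D ⊆ A ∪ B} has a minimum and this minimum equals min{γ, δ}. -/
open Pointwise

/-- A collection `𝒟` of subsets is of *ordered type* if the intersection of any two
members is either one of them or empty. -/
def IsOrderedType {G : Type*} (𝒟 : Set (Set G)) : Prop :=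
  ∀ D₁ ∈ 𝒟, ∀ D₂ ∈ 𝒟, D₁ ∩ D₂ = D₁ ∨ D₁ ∩ D₂ = D₂ ∨ D₁ ∩ D₂ = ∅

namespace IsOrderedType

variable {G : Type*} {𝒟 : Set (Set G)}

theorem subset_or_superset_or_disjoint (hot : IsOrderedType 𝒟) {D₁ D₂ : Set G}
    (h₁ : D₁ ∈ 𝒟) (h₂ : D₂ ∈ 𝒟) : D₁ ⊆ D₂ ∨ D₂ ⊆ D₁ ∨ Disjoint D₁ D₂ := by
  simpa only [Set.inter_eq_left, Set.inter_eq_right, ← Set.disjoint_iff_inter_eq_empty]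
    using hot D₁ h₁ D₂ h₂

theorem subset_or_subset_of_subset_union (hot : IsOrderedType 𝒟) {A B D : Set G}
    (hA : A ∈ 𝒟) (hB : B ∈ 𝒟) (hD : D ∈ 𝒟) (hAB : A ∪ B ∉ 𝒟) (hsub : D ⊆ A ∪ B) :
    D ⊆ A ∨ D ⊆ B := by
  rcases hot.subset_or_superset_or_disjoint hD hA with hDA | hAD | hDA
  · exact .inl hDA
  · rcases hot.subset_or_superset_or_disjoint hD hB with hDB | hBD | hDB
    · exact .inr hDB
    · exact absurd (hsub.antisymm (Set.union_subset hAD hBD) ▸ hD) hAB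
    · exact .inl (hDB.subset_left_of_subset_union hsub)
  · exact .inr (hDA.subset_right_of_subset_union hsub)

end IsOrderedType

theorem union_of_two_distinguished_has_level_min_general
    {G : Type*} {Γ : Type*} [LinearOrder Γ]
    (𝒟 : Set (Set G)) (lv : Set G → Γ)
    (hot : IsOrderedType 𝒟)
    (hlv_mono : ∀ D' ∈ 𝒟, ∀ D ∈ 𝒟, D' ⊆ D → lv D ≤ lv D')
    {A B : Set G} (hA : A ∈ 𝒟) (hB : B ∈ 𝒟)
    {γ δ : Γ} (hγ : lv A = γ) (hδ : lv B = δ)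
    (hAB : A ∪ B ∉ 𝒟) :
    IsLeast {ε | ∃ D ∈ 𝒟, D ⊆ A ∪ B ∧ lv D = ε} (min γ δ) := by
  subst hγ hδ
  constructor
  · rcases min_choice (lv A) (lv B) with h | h
    · exact ⟨A, hA, Set.subset_union_left, h.symm⟩
    · exact ⟨B, hB, Set.subset_union_right, h.symm⟩
  · rintro _ ⟨D, hD, hsub, rfl⟩
    rcases hot.subset_or_subset_of_subset_union hA hB hD hAB hsub with hDA | hDB
    · exact min_le_of_left_le (hlv_mono D hD A hA hDA)
    · exact min_le_of_right_le (hlv_mono D hD B hB hDB)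

/-- If `G` is of ordered type with respect to `𝒟` and `A, B ∈ 𝒟` have levels `γ, δ`
respectively, and `A ∪ B ∉ 𝒟`, then `A ∪ B` has level `min γ δ`. -/
theorem union_of_two_distinguished_has_level_min
    {G : Type*} [Group G] {Γ : Type*} [LinearOrder Γ]
    (𝒟 : Set (Set G)) (lv : Set G → Γ)
    (h𝒟ne : ∀ D ∈ 𝒟, (D : Set G).Nonempty)
    (h𝒟tr : ∀ (g : G), ∀ D ∈ 𝒟, g • D ∈ 𝒟)
    (hot : IsOrderedType 𝒟)
    (hlv_inv : ∀ (g : G), ∀ D ∈ 𝒟, lv (g • D) = lv D)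
    (hlv_mono : ∀ D' ∈ 𝒟, ∀ D ∈ 𝒟, D' ⊆ D → lv D ≤ lv D')
    {A B : Set G} (hA : A ∈ 𝒟) (hB : B ∈ 𝒟)
    {γ δ : Γ} (hγ : lv A = γ) (hδ : lv B = δ)
    (hAB : A ∪ B ∉ 𝒟) :
    IsLeast {ε | ∃ D ∈ 𝒟, D ⊆ A ∪ B ∧ lv D = ε} (min γ δ) :=
  union_of_two_distinguished_has_level_min_general 𝒟 lv hot hlv_mono hA hB hγ hδ hAB
end

section
/- Let G be a group of ordered type with respect to 𝒟, with a level function lv. Let A₁, …, A_r ∈ 𝒟 be finitely many distinguished sets such that for every subset S ⊆ {1, …, r} with at least two elements the union ⋃_{i∈S} A_i does not belong to 𝒟. Then A = A₁ ∪ ⋯ ∪ A_r has level min{lv(A₁), …, lv(A_r)}; that is, the set {lv(D) : D ∈ 𝒟, D ⊆ A} has a minimum equal to min_i lv(A_i). -/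
open Pointwise

namespace IsOrderedType

variable {α : Type*} {𝒟 : Set (Set α)}

theorem subset_or_subset_of_inter_nonempty (hot : IsOrderedType 𝒟) {D₁ D₂ : Set α}
    (h₁ : D₁ ∈ 𝒟) (h₂ : D₂ ∈ 𝒟) (hne : (D₁ ∩ D₂).Nonempty) : D₁ ⊆ D₂ ∨ D₂ ⊆ D₁ := by
  rcases hot D₁ h₁ D₂ h₂ with h | h | h
  · exact Or.inl (Set.inter_eq_left.mp h)
  · exact Or.inr (Set.inter_eq_right.mp h)
  · exact absurd h hne.ne_empty

/-- Since `𝒟` is of ordered type, every `A i` meeting `D` but not containing it lies inside `D`;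
so if `D` lay in no single `A i`, it would be the union of the at least two `A i` it meets. -/
theorem exists_subset_of_subset_iUnion {ι : Type*} [Fintype ι] [Nonempty ι]
    (hot : IsOrderedType 𝒟) {A : ι → Set α} (hA : ∀ i, A i ∈ 𝒟)
    (hsub : ∀ S : Finset ι, 2 ≤ S.card → (⋃ i ∈ S, A i) ∉ 𝒟)
    {D : Set α} (hD : D ∈ 𝒟) (hDA : D ⊆ ⋃ i, A i) : ∃ i, D ⊆ A i := by
  classical
  by_contra! hnot
  set S := Finset.univ.filter fun i => (D ∩ A i).Nonempty
  have hAD : ∀ i ∈ S, A i ⊆ D := fun i hi =>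
    (hot.subset_or_subset_of_inter_nonempty hD (hA i) (Finset.mem_filter.mp hi).2).resolve_left
      (hnot i)
  have hD_eq : D = ⋃ i ∈ S, A i := by
    refine subset_antisymm (fun x hx => ?_) (Set.iUnion₂_subset hAD)
    obtain ⟨i, hxi⟩ := Set.mem_iUnion.mp (hDA hx)
    exact Set.mem_biUnion (Finset.mem_filter.mpr ⟨Finset.mem_univ i, x, hx, hxi⟩) hxi
  have hS : S.card ≤ 1 := by
    by_contra! hS
    exact hsub S hS (hD_eq ▸ hD)
  obtain ⟨i, hi⟩ := Finset.card_le_one_iff_subset_singleton.mp hS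
  refine hnot i (hD_eq.trans_subset (Set.iUnion₂_subset fun j hj => ?_))
  rw [Finset.mem_singleton.mp (hi hj)]

end IsOrderedType

theorem union_of_distinguished_has_level_min_general
    {G : Type*} {Γ : Type*} [LinearOrder Γ]
    (𝒟 : Set (Set G)) (lv : Set G → Γ)
    (hot : IsOrderedType 𝒟)
    (hlv_mono : ∀ D' ∈ 𝒟, ∀ D ∈ 𝒟, D' ⊆ D → lv D ≤ lv D')
    {r : ℕ} (hr : r ≠ 0) (A : Fin r → Set G) (hA : ∀ i, A i ∈ 𝒟)
    (hsub : ∀ S : Finset (Fin r), 2 ≤ S.card → (⋃ i ∈ S, A i) ∉ 𝒟) :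
    IsLeast {ε | ∃ D ∈ 𝒟, D ⊆ (⋃ i, A i) ∧ lv D = ε}
      (Finset.univ.inf' (Finset.univ_nonempty_iff.mpr
        (Fin.pos_iff_nonempty.mp (Nat.pos_of_ne_zero hr))) (fun i => lv (A i))) := by
  have : Nonempty (Fin r) := Fin.pos_iff_nonempty.mp (Nat.pos_of_ne_zero hr)
  constructor
  · obtain ⟨i, -, hi⟩ := Finset.exists_mem_eq_inf' Finset.univ_nonempty fun i => lv (A i)
    exact ⟨A i, hA i, Set.subset_iUnion A i, hi.symm⟩
  · rintro _ ⟨D, hD, hDA, rfl⟩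
    obtain ⟨i, hi⟩ := hot.exists_subset_of_subset_iUnion hA hsub hD hDA
    exact (Finset.inf'_le _ (Finset.mem_univ i)).trans (hlv_mono D hD (A i) (hA i) hi)

/-- If `G` is of ordered type with respect to `𝒟` and `A₁, …, A_r ∈ 𝒟` are such that no
union of a subcollection of at least two of them belongs to `𝒟`, then `A₁ ∪ ⋯ ∪ A_r` has
level `min_i lv(A_i)`. -/
theorem union_of_distinguished_has_level_min
    {G : Type*} [Group G] {Γ : Type*} [LinearOrder Γ]
    (𝒟 : Set (Set G)) (lv : Set G → Γ)
    (h𝒟ne : ∀ D ∈ 𝒟, (D : Set G).Nonempty)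
    (h𝒟tr : ∀ (g : G), ∀ D ∈ 𝒟, g • D ∈ 𝒟)
    (hot : IsOrderedType 𝒟)
    (hlv_inv : ∀ (g : G), ∀ D ∈ 𝒟, lv (g • D) = lv D)
    (hlv_mono : ∀ D' ∈ 𝒟, ∀ D ∈ 𝒟, D' ⊆ D → lv D ≤ lv D')
    {r : ℕ} (hr : r ≠ 0) (A : Fin r → Set G) (hA : ∀ i, A i ∈ 𝒟)
    (hsub : ∀ S : Finset (Fin r), 2 ≤ S.card → (⋃ i ∈ S, A i) ∉ 𝒟) :
    IsLeast {ε | ∃ D ∈ 𝒟, D ⊆ (⋃ i, A i) ∧ lv D = ε}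
      (Finset.univ.inf' (Finset.univ_nonempty_iff.mpr
        (Fin.pos_iff_nonempty.mp (Nat.pos_of_ne_zero hr))) (fun i => lv (A i))) :=
  union_of_distinguished_has_level_min_general 𝒟 lv hot hlv_mono hr A hA hsub
end

section
/- Let G be a group of ordered type with respect to 𝒟, with a level function lv. If A₁, …, A_r ∈ 𝒟 are finitely many distinguished sets, then A = A₁ ∪ ⋯ ∪ A_r has a level; that is, the set {lv(D) : D ∈ 𝒟, D ⊆ A} has a minimum. -/
/-!
A distinguished set `D` inside `A₁ ∪ ⋯ ∪ A_r` meets each `Aᵢ` either not at all, or inside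
`Aᵢ`, or containing `Aᵢ`. So either `D` lies in a single `Aᵢ`, and then `lv D ≥ lv Aᵢ`, or `D`
is the union of the `Aᵢ` it contains. Hence the level of the union is the least level among the
finitely many distinguished sets of the form `⋃ i ∈ S, Aᵢ`.
-/

open Pointwise

namespace IsOrderedType

variable {G ι : Type*} {𝒟 : Set (Set G)} {A : ι → Set G}

theorem subset_or_eq_biUnion (hot : IsOrderedType 𝒟) (hA : ∀ i, A i ∈ 𝒟) {D : Set G}
    (hD : D ∈ 𝒟) (hDA : D ⊆ ⋃ i, A i) :
    (∃ i, D ⊆ A i) ∨ D = ⋃ i ∈ {i | A i ⊆ D}, A i := by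
  refine or_iff_not_imp_left.2 fun hnot => ?_
  push Not at hnot
  refine Set.Subset.antisymm (fun x hx => ?_) (Set.iUnion₂_subset fun i hi => hi)
  obtain ⟨i, hxi⟩ := Set.mem_iUnion.1 (hDA hx)
  rcases hot D hD (A i) (hA i) with h | h | h
  · exact absurd (Set.inter_eq_left.1 h) (hnot i)
  · exact Set.mem_biUnion (Set.inter_eq_right.1 h) hxi
  · exact absurd h (Set.nonempty_iff_ne_empty.1 ⟨x, hx, hxi⟩)

theorem exists_isLeast_lv_of_subset_iUnion [Finite ι] [Nonempty ι] {Γ : Type*} [LinearOrder Γ]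
    (hot : IsOrderedType 𝒟) (lv : Set G → Γ)
    (hlv_mono : ∀ D' ∈ 𝒟, ∀ D ∈ 𝒟, D' ⊆ D → lv D ≤ lv D') (hA : ∀ i, A i ∈ 𝒟) :
    ∃ γ : Γ, IsLeast {ε | ∃ D ∈ 𝒟, D ⊆ ⋃ i, A i ∧ lv D = ε} γ := by
  set 𝒞 := 𝒟 ∩ Set.range fun S : Set ι => ⋃ i ∈ S, A i
  have hA𝒞 : ∀ i, A i ∈ 𝒞 := fun i => ⟨hA i, {i}, Set.biUnion_singleton i A⟩
  obtain ⟨U, ⟨hU, S, rfl⟩, hU_min⟩ := Set.exists_min_image 𝒞 lv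
    ((Set.finite_range _).inter_of_right 𝒟) ⟨_, hA𝒞 (Classical.arbitrary ι)⟩
  refine ⟨_, ⟨_, hU, Set.iUnion₂_subset fun i _ => Set.subset_iUnion A i, rfl⟩, ?_⟩
  rintro _ ⟨D, hD, hDA, rfl⟩
  rcases hot.subset_or_eq_biUnion hA hD hDA with ⟨i, hDi⟩ | hDeq
  · exact (hU_min _ (hA𝒞 i)).trans (hlv_mono D hD _ (hA i) hDi)
  · exact hU_min D ⟨hD, _, hDeq.symm⟩

end IsOrderedType

theorem union_of_distinguished_has_level_general
    {G : Type*} {Γ : Type*} [LinearOrder Γ]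
    (𝒟 : Set (Set G)) (lv : Set G → Γ)
    (hot : IsOrderedType 𝒟)
    (hlv_mono : ∀ D' ∈ 𝒟, ∀ D ∈ 𝒟, D' ⊆ D → lv D ≤ lv D')
    {r : ℕ} (hr : r ≠ 0) (A : Fin r → Set G) (hA : ∀ i, A i ∈ 𝒟) :
    ∃ γ : Γ, IsLeast {ε | ∃ D ∈ 𝒟, D ⊆ (⋃ i, A i) ∧ lv D = ε} γ := by
  have : NeZero r := ⟨hr⟩
  exact hot.exists_isLeast_lv_of_subset_iUnion lv hlv_mono hA

/-- If `G` is of ordered type with respect to `𝒟` then any union of finitely many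
distinguished sets has a level. -/
theorem union_of_distinguished_has_level
    {G : Type*} [Group G] {Γ : Type*} [LinearOrder Γ]
    (𝒟 : Set (Set G)) (lv : Set G → Γ)
    (h𝒟ne : ∀ D ∈ 𝒟, (D : Set G).Nonempty)
    (h𝒟tr : ∀ (g : G), ∀ D ∈ 𝒟, g • D ∈ 𝒟)
    (hot : IsOrderedType 𝒟)
    (hlv_inv : ∀ (g : G), ∀ D ∈ 𝒟, lv (g • D) = lv D)
    (hlv_mono : ∀ D' ∈ 𝒟, ∀ D ∈ 𝒟, D' ⊆ D → lv D ≤ lv D')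
    {r : ℕ} (hr : r ≠ 0) (A : Fin r → Set G) (hA : ∀ i, A i ∈ 𝒟) :
    ∃ γ : Γ, IsLeast {ε | ∃ D ∈ 𝒟, D ⊆ (⋃ i, A i) ∧ lv D = ε} γ :=
  union_of_distinguished_has_level_general 𝒟 lv hot hlv_mono hr A hA
end

section
/- Let G be a group of ordered type with respect to 𝒟, and equip G with a topology having 𝒟 as a basis. If this topology is Hausdorff, then every member of 𝒟 is a closed subset of G. -/
open Pointwise

/-! A point `x ∉ D` has a basic neighbourhood `B` missing a chosen point of `D`. Then neither
of `B`, `D` contains the other, so in an ordered family they are disjoint, and `B` is a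
neighbourhood of `x` inside `Dᶜ`. -/

theorem IsOrderedType.disjoint_of_not_subset {X : Type*} {𝒟 : Set (Set X)}
    (hot : IsOrderedType 𝒟) {B D : Set X} (hB : B ∈ 𝒟) (hD : D ∈ 𝒟) (hBD : ¬B ⊆ D)
    (hDB : ¬D ⊆ B) : Disjoint B D := by
  rcases hot B hB D hD with h | h | h
  · exact absurd (Set.inter_eq_left.mp h) hBD
  · exact absurd (Set.inter_eq_right.mp h) hDB
  · exact Set.disjoint_iff_inter_eq_empty.mpr h

theorem TopologicalSpace.IsTopologicalBasis.isClosed_of_isOrderedType {X : Type*}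
    [TopologicalSpace X] [T1Space X] {𝒟 : Set (Set X)} (hbasis : IsTopologicalBasis 𝒟)
    (hot : IsOrderedType 𝒟) {D : Set X} (hD : D ∈ 𝒟) (hne : D.Nonempty) : IsClosed D := by
  obtain ⟨y, hy⟩ := hne
  refine isOpen_compl_iff.mp (isOpen_iff_forall_mem_open.mpr fun x hx => ?_)
  have hxy : x ≠ y := fun h => hx (h ▸ hy)
  obtain ⟨B, hB, hxB, hBy⟩ := hbasis.exists_subset_of_mem_open hxy isOpen_compl_singleton
  have hBD : Disjoint B D :=
    hot.disjoint_of_not_subset hB hD (fun h => hx (h hxB)) (fun h => hBy (h hy) rfl)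
  exact ⟨B, hBD.subset_compl_right, hbasis.isOpen hB, hxB⟩

theorem distinguished_isClosed_of_orderedType_general
    {G : Type*} [TopologicalSpace G] [T2Space G]
    (𝒟 : Set (Set G))
    (h𝒟ne : ∀ D ∈ 𝒟, (D : Set G).Nonempty)
    (hbasis : TopologicalSpace.IsTopologicalBasis 𝒟)
    (hot : IsOrderedType 𝒟) :
    ∀ D ∈ 𝒟, IsClosed D :=
  fun D hD => hbasis.isClosed_of_isOrderedType hot hD (h𝒟ne D hD)

/-- If `G` is of ordered type with respect to `𝒟`, and `G` carries a Hausdorff topology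
having `𝒟` as a basis, then every distinguished set is closed. -/
theorem distinguished_isClosed_of_orderedType
    {G : Type*} [Group G] [TopologicalSpace G] [T2Space G]
    (𝒟 : Set (Set G))
    (h𝒟ne : ∀ D ∈ 𝒟, (D : Set G).Nonempty)
    (h𝒟tr : ∀ (g : G), ∀ D ∈ 𝒟, g • D ∈ 𝒟)
    (hbasis : TopologicalSpace.IsTopologicalBasis 𝒟)
    (hot : IsOrderedType 𝒟) :
    ∀ D ∈ 𝒟, IsClosed D :=
  distinguished_isClosed_of_orderedType_general 𝒟 h𝒟ne hbasis hot
end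

section
/- Let G be a group, let ℒ be a collection of subgroups of G, and let 𝒟 = {gH : g ∈ G, H ∈ ℒ} be the family of their left cosets. Suppose G is of ordered type with respect to 𝒟, lv is a level function on 𝒟, and G carries a Hausdorff topology having 𝒟 as a basis. Let A ∈ 𝒟 with lv(A) = γ and let B ∈ 𝒟 with B ⊆ A and lv(B) = δ > γ. Then A \ B contains a member of 𝒟 of level exactly δ, and every member of 𝒟 contained in A \ B has level ≥ γ; consequently if A \ B has a level then γ ≤ lv(A \ B) ≤ δ. -/
open Pointwise

/-!
If `B = b • K ⊆ A = a • H` are cosets, then `b ∈ A` forces `A = b • H`, hence `K ≤ H`.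
Since `lv B ≠ lv A`, the inclusion is strict; for any `x ∈ A \ B` the coset `x • K` lies in
`x • H = A` and misses `B` (distinct cosets of `K` are disjoint), and it is a translate of
`B`, so it has level `δ`. The lower bound `γ` is monotonicity of `lv` under inclusion in `A`.
-/

section LeftCoset

variable {G : Type*} [Group G] {H K : Subgroup G} {a b x : G}

theorem smul_coe_subgroup_eq_of_mem (hx : x ∈ a • (H : Set G)) :
    x • (H : Set G) = a • (H : Set G) :=
  ((leftCoset_eq_iff H).2 ((mem_leftCoset_iff a).1 hx)).symm

theorem Subgroup.le_of_smul_subset_smul (h : b • (K : Set G) ⊆ a • (H : Set G)) :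
    K ≤ H := by
  rwa [← smul_coe_subgroup_eq_of_mem (h (mem_own_leftCoset K.toSubmonoid b)),
    Set.smul_set_subset_smul_set_iff] at h

theorem smul_coe_subgroup_disjoint_of_notMem (hx : x ∉ b • (K : Set G)) :
    Disjoint (x • (K : Set G)) (b • (K : Set G)) := by
  refine Set.disjoint_left.2 fun z hzx hzb => hx ?_
  rw [← smul_coe_subgroup_eq_of_mem hzb, smul_coe_subgroup_eq_of_mem hzx]
  exact mem_own_leftCoset K.toSubmonoid x

theorem exists_smul_subset_sdiff_of_ssubset (h : b • (K : Set G) ⊂ a • (H : Set G)) :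
    ∃ x : G, x • (K : Set G) ⊆ a • (H : Set G) \ b • (K : Set G) := by
  obtain ⟨x, hxA, hxB⟩ := Set.exists_of_ssubset h
  refine ⟨x, Set.subset_sdiff.2 ⟨?_, smul_coe_subgroup_disjoint_of_notMem hxB⟩⟩
  rw [← smul_coe_subgroup_eq_of_mem hxA]
  exact Set.smul_set_mono (Subgroup.le_of_smul_subset_smul h.subset)

end LeftCoset

theorem level_of_difference_between_general
    {G : Type*} [Group G]
    {Γ : Type*} [LinearOrder Γ]
    (ℒ : Set (Subgroup G)) (𝒟 : Set (Set G))
    (h𝒟 : 𝒟 = {D | ∃ g : G, ∃ H ∈ ℒ, D = g • (H : Set G)})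
    (lv : Set G → Γ)
    (hlv_inv : ∀ (g : G), ∀ D ∈ 𝒟, lv (g • D) = lv D)
    (hlv_mono : ∀ D' ∈ 𝒟, ∀ D ∈ 𝒟, D' ⊆ D → lv D ≤ lv D')
    {A B : Set G} (hA : A ∈ 𝒟) (hB : B ∈ 𝒟) (hBA : B ⊆ A)
    {γ δ : Γ} (hγ : lv A = γ) (hδ : lv B = δ) (hγδ : γ < δ) :
    (∃ D ∈ 𝒟, D ⊆ A \ B ∧ lv D = δ) ∧
    (∀ D ∈ 𝒟, D ⊆ A \ B → γ ≤ lv D) ∧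
    (∀ ε : Γ, IsLeast {ε' | ∃ D ∈ 𝒟, D ⊆ A \ B ∧ lv D = ε'} ε → γ ≤ ε ∧ ε ≤ δ) := by
  have hBA_strict : B ⊂ A := hBA.ssubset_of_ne fun h => hγδ.ne (by rw [← hγ, ← hδ, h])
  have hlow : ∀ D ∈ 𝒟, D ⊆ A \ B → γ ≤ lv D := fun D hD hDsub =>
    hγ ▸ hlv_mono D hD A hA (hDsub.trans Set.sdiff_subset)
  obtain ⟨a, HA, -, rfl⟩ := h𝒟 ▸ hA
  obtain ⟨b, HB, hHB, rfl⟩ := h𝒟 ▸ hB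
  obtain ⟨x, hx⟩ := exists_smul_subset_sdiff_of_ssubset hBA_strict
  have hx𝒟 : x • (HB : Set G) ∈ 𝒟 := h𝒟 ▸ ⟨x, HB, hHB, rfl⟩
  have hlvx : lv (x • (HB : Set G)) = δ := by
    rw [← hδ, ← hlv_inv (x * b⁻¹) _ hB, smul_smul, inv_mul_cancel_right]
  refine ⟨⟨_, hx𝒟, hx, hlvx⟩, hlow, fun ε ⟨⟨D, hD, hDsub, hε⟩, hleast⟩ => ?_⟩
  exact ⟨hε ▸ hlow D hD hDsub, hleast ⟨_, hx𝒟, hx, hlvx⟩⟩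

/-- Suppose the distinguished sets of `G` are the left cosets of a family `ℒ` of
subgroups, `G` is Hausdorff and of ordered type, `A` is distinguished of level `γ` and
`B ⊆ A` is distinguished of level `δ > γ`.  Then `A \ B` contains a distinguished set
of level exactly `δ`, every distinguished subset of `A \ B` has level `≥ γ`, and hence
if `A \ B` has a level `ε` then `γ ≤ ε ≤ δ`. -/
theorem level_of_difference_between
    {G : Type*} [Group G] [TopologicalSpace G] [T2Space G]
    {Γ : Type*} [LinearOrder Γ]
    (ℒ : Set (Subgroup G)) (𝒟 : Set (Set G))
    (h𝒟 : 𝒟 = {D | ∃ g : G, ∃ H ∈ ℒ, D = g • (H : Set G)})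
    (lv : Set G → Γ)
    (hbasis : TopologicalSpace.IsTopologicalBasis 𝒟)
    (hot : IsOrderedType 𝒟)
    (hlv_inv : ∀ (g : G), ∀ D ∈ 𝒟, lv (g • D) = lv D)
    (hlv_mono : ∀ D' ∈ 𝒟, ∀ D ∈ 𝒟, D' ⊆ D → lv D ≤ lv D')
    {A B : Set G} (hA : A ∈ 𝒟) (hB : B ∈ 𝒟) (hBA : B ⊆ A)
    {γ δ : Γ} (hγ : lv A = γ) (hδ : lv B = δ) (hγδ : γ < δ) :
    (∃ D ∈ 𝒟, D ⊆ A \ B ∧ lv D = δ) ∧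
    (∀ D ∈ 𝒟, D ⊆ A \ B → γ ≤ lv D) ∧
    (∀ ε : Γ, IsLeast {ε' | ∃ D ∈ 𝒟, D ⊆ A \ B ∧ lv D = ε'} ε → γ ≤ ε ∧ ε ≤ δ) :=
  level_of_difference_between_general ℒ 𝒟 h𝒟 lv hlv_inv hlv_mono hA hB hBA hγ hδ hγδ
end

section
/- Let G be a group of ordered type with respect to 𝒟, with a level function lv, and equip G with a Hausdorff topology having 𝒟 as a basis. For 1 ≤ i ≤ r let A_i ∈ 𝒟 and let B_1, …, B_s be members of 𝒟 or empty, with each B_j contained in A_i for some i. Set C_i = A_i \ (B_1 ∪ ⋯ ∪ B_s) and suppose the sets C_i are pairwise disjoint and that no union of any nonempty subcollection of the C_i belongs to 𝒟. Then every D ∈ 𝒟 with D ⊆ C = C_1 ∪ ⋯ ∪ C_r satisfies lv(D) ≥ min{lv(A_1), …, lv(A_r)}; in particular, if C has a level then its level is at least min_i lv(A_i). -/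
/-!
Let `D ∈ 𝒟` lie in `C = ⋃ i, C i`. Since `𝒟` is of ordered type, `D` either lies in some `A i`,
and then `lv (A i) ≤ lv D` by monotonicity, or it contains every `A i` it meets. In the latter
case `D` is the union of the `C i` with `A i ⊆ D`, a nonempty subcollection, which is excluded.
-/

open Pointwise

theorem IsOrderedType.subset_or_subset_of_inter_nonempty_s7 {α : Type*} {𝒟 : Set (Set α)}
    (hot : IsOrderedType 𝒟) {D₁ D₂ : Set α} (h₁ : D₁ ∈ 𝒟) (h₂ : D₂ ∈ 𝒟)
    (hne : (D₁ ∩ D₂).Nonempty) : D₁ ⊆ D₂ ∨ D₂ ⊆ D₁ := by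
  rcases hot D₁ h₁ D₂ h₂ with h | h | h
  · exact .inl (Set.inter_eq_left.mp h)
  · exact .inr (Set.inter_eq_right.mp h)
  · exact absurd h hne.ne_empty

theorem Set.exists_finset_eq_biUnion_of_subset_iUnion {α ι : Type*} [Finite ι]
    {D : Set α} {A C : ι → Set α} (hD : D.Nonempty) (hCA : ∀ i, C i ⊆ A i)
    (hDC : D ⊆ ⋃ i, C i) (hAD : ∀ i, (D ∩ A i).Nonempty → A i ⊆ D) :
    ∃ S : Finset ι, S.Nonempty ∧ D = ⋃ i ∈ S, C i := by
  classical
  have := Fintype.ofFinite ι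
  have hmem : ∀ x ∈ D, ∃ i, A i ⊆ D ∧ x ∈ C i := fun x hx ↦ by
    obtain ⟨i, hi⟩ := Set.mem_iUnion.mp (hDC hx)
    exact ⟨i, hAD i ⟨x, hx, hCA i hi⟩, hi⟩
  obtain ⟨x, hx⟩ := hD
  obtain ⟨i₀, hi₀, -⟩ := hmem x hx
  refine ⟨Finset.univ.filter (fun i ↦ A i ⊆ D), ⟨i₀, by simpa using hi₀⟩, ?_⟩
  apply Set.Subset.antisymm
  · intro y hy
    obtain ⟨i, hi, hyi⟩ := hmem y hy
    exact Set.mem_biUnion (by simpa using hi) hyi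
  · simp only [Finset.mem_filter, Finset.mem_univ, true_and, Set.iUnion_subset_iff]
    exact fun i hi ↦ (hCA i).trans hi

theorem IsOrderedType.exists_subset_of_subset_iUnion_s7 {α ι : Type*} [Finite ι]
    {𝒟 : Set (Set α)} (hot : IsOrderedType 𝒟) (h𝒟ne : ∀ D ∈ 𝒟, D.Nonempty)
    {A C : ι → Set α} (hA : ∀ i, A i ∈ 𝒟) (hCA : ∀ i, C i ⊆ A i)
    (hCnd : ∀ S : Finset ι, S.Nonempty → (⋃ i ∈ S, C i) ∉ 𝒟)
    {D : Set α} (hD : D ∈ 𝒟) (hDC : D ⊆ ⋃ i, C i) : ∃ i, D ⊆ A i := by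
  by_contra! hnot
  have hAD : ∀ i, (D ∩ A i).Nonempty → A i ⊆ D := fun i hi ↦
    (hot.subset_or_subset_of_inter_nonempty_s7 hD (hA i) hi).resolve_left (hnot i)
  obtain ⟨S, hS, rfl⟩ :=
    Set.exists_finset_eq_biUnion_of_subset_iUnion (h𝒟ne D hD) hCA hDC hAD
  exact hCnd S hS hD

theorem level_of_ddd_ge_general
    {G : Type*}
    {Γ : Type*} [LinearOrder Γ]
    (𝒟 : Set (Set G)) (lv : Set G → Γ)
    (h𝒟ne : ∀ D ∈ 𝒟, (D : Set G).Nonempty)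
    (hot : IsOrderedType 𝒟)
    (hlv_mono : ∀ D' ∈ 𝒟, ∀ D ∈ 𝒟, D' ⊆ D → lv D ≤ lv D')
    {r s : ℕ} (hr : r ≠ 0)
    (A : Fin r → Set G) (hA : ∀ i, A i ∈ 𝒟)
    (B : Fin s → Set G)
    (C : Fin r → Set G) (hC : ∀ i, C i = A i \ ⋃ j, B j)
    (hCnd : ∀ S : Finset (Fin r), S.Nonempty → (⋃ i ∈ S, C i) ∉ 𝒟) :
    (∀ D ∈ 𝒟, D ⊆ (⋃ i, C i) →
      Finset.univ.inf' (Finset.univ_nonempty_iff.mpr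
        (Fin.pos_iff_nonempty.mp (Nat.pos_of_ne_zero hr))) (fun i => lv (A i)) ≤ lv D) ∧
    (∀ ε : Γ, IsLeast {ε' | ∃ D ∈ 𝒟, D ⊆ (⋃ i, C i) ∧ lv D = ε'} ε →
      Finset.univ.inf' (Finset.univ_nonempty_iff.mpr
        (Fin.pos_iff_nonempty.mp (Nat.pos_of_ne_zero hr))) (fun i => lv (A i)) ≤ ε) := by
  have hCA : ∀ i, C i ⊆ A i := fun i ↦ (hC i).trans_subset Set.sdiff_subset
  have exists_lv_le : ∀ D ∈ 𝒟, D ⊆ ⋃ i, C i → ∃ i ∈ Finset.univ, lv (A i) ≤ lv D := fun D hD hDC ↦ by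
    obtain ⟨i, hi⟩ := hot.exists_subset_of_subset_iUnion_s7 h𝒟ne hA hCA hCnd hD hDC
    exact ⟨i, Finset.mem_univ i, hlv_mono D hD (A i) (hA i) hi⟩
  refine ⟨fun D hD hDC ↦ (Finset.inf'_le_iff _).mpr (exists_lv_le D hD hDC), fun ε hε ↦ ?_⟩
  obtain ⟨D, hD, hDC, rfl⟩ := hε.1
  exact (Finset.inf'_le_iff _).mpr (exists_lv_le D hD hDC)

/-- Let `G` be Hausdorff and of ordered type, `A i ∈ 𝒟`, `B j` distinguished or empty,
each `B j` contained in some `A i`, and let `C i = A i \ ⋃ j, B j` be pairwise disjoint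
with no union of a nonempty subcollection of the `C i` distinguished.  Then every
distinguished subset of `C = ⋃ i, C i` has level at least `min_i lv (A i)`; in
particular if `C` has a level then it is at least `min_i lv (A i)`. -/
theorem level_of_ddd_ge
    {G : Type*} [Group G] [TopologicalSpace G] [T2Space G]
    {Γ : Type*} [LinearOrder Γ]
    (𝒟 : Set (Set G)) (lv : Set G → Γ)
    (h𝒟ne : ∀ D ∈ 𝒟, (D : Set G).Nonempty)
    (h𝒟tr : ∀ (g : G), ∀ D ∈ 𝒟, g • D ∈ 𝒟)
    (hbasis : TopologicalSpace.IsTopologicalBasis 𝒟)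
    (hot : IsOrderedType 𝒟)
    (hlv_inv : ∀ (g : G), ∀ D ∈ 𝒟, lv (g • D) = lv D)
    (hlv_mono : ∀ D' ∈ 𝒟, ∀ D ∈ 𝒟, D' ⊆ D → lv D ≤ lv D')
    {r s : ℕ} (hr : r ≠ 0)
    (A : Fin r → Set G) (hA : ∀ i, A i ∈ 𝒟)
    (B : Fin s → Set G) (hB : ∀ j, B j ∈ 𝒟 ∨ B j = ∅)
    (hBA : ∀ j, ∃ i, B j ⊆ A i)
    (C : Fin r → Set G) (hC : ∀ i, C i = A i \ ⋃ j, B j)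
    (hCdisj : Pairwise (Function.onFun Disjoint C))
    (hCnd : ∀ S : Finset (Fin r), S.Nonempty → (⋃ i ∈ S, C i) ∉ 𝒟) :
    (∀ D ∈ 𝒟, D ⊆ (⋃ i, C i) →
      Finset.univ.inf' (Finset.univ_nonempty_iff.mpr
        (Fin.pos_iff_nonempty.mp (Nat.pos_of_ne_zero hr))) (fun i => lv (A i)) ≤ lv D) ∧
    (∀ ε : Γ, IsLeast {ε' | ∃ D ∈ 𝒟, D ⊆ (⋃ i, C i) ∧ lv D = ε'} ε →
      Finset.univ.inf' (Finset.univ_nonempty_iff.mpr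
        (Fin.pos_iff_nonempty.mp (Nat.pos_of_ne_zero hr))) (fun i => lv (A i)) ≤ ε) :=
  level_of_ddd_ge_general 𝒟 lv h𝒟ne hot hlv_mono hr A hA B C hC hCnd
end

section
/- Let G be a group of ordered type with respect to 𝒟, with a level function lv, and equip G with a Hausdorff topology having 𝒟 as a basis. Then for every set C in the ring of ddd-sets of G, the set of levels {lv(D) : D ∈ 𝒟, D ⊆ C} is bounded below in Γ (i.e. no ddd-set contains distinguished subsets of arbitrarily low level; equivalently, every ddd-set either has a level or is of type E). -/
/-! A ddd-set `C` is covered by finitely many distinguished sets `s`. Since `𝒟` is of ordered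
type, a distinguished `D ⊆ C` either lies inside some `E ∈ s`, so that `lv E ≤ lv D`, or contains
every `E ∈ s` it meets and is then the union of a subfamily of `s`. Either way `lv D` lies above
one of the finitely many values `lv E` (`E ∈ s`) and `lv (⋃₀ t)` (`t ⊆ s`). -/

open Pointwise

/-- The ring of ddd-sets generated by the distinguished sets `𝒟`: the smallest
collection of subsets containing `𝒟` and the empty set and closed under finite unions,
finite intersections and set differences. -/
inductive IsDDD {G : Type*} (𝒟 : Set (Set G)) : Set G → Prop
  | base {D : Set G} : D ∈ 𝒟 → IsDDD 𝒟 D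
  | empty : IsDDD 𝒟 ∅
  | union {A B : Set G} : IsDDD 𝒟 A → IsDDD 𝒟 B → IsDDD 𝒟 (A ∪ B)
  | inter {A B : Set G} : IsDDD 𝒟 A → IsDDD 𝒟 B → IsDDD 𝒟 (A ∩ B)
  | sdiff {A B : Set G} : IsDDD 𝒟 A → IsDDD 𝒟 B → IsDDD 𝒟 (A \ B)

section

variable {α : Type*} {𝒟 : Set (Set α)}

theorem IsDDD.exists_finite_subset_sUnion {C : Set α} (hC : IsDDD 𝒟 C) :
    ∃ s : Set (Set α), s.Finite ∧ s ⊆ 𝒟 ∧ C ⊆ ⋃₀ s := by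
  induction hC with
  | base hD => exact ⟨{_}, Set.finite_singleton _, Set.singleton_subset_iff.2 hD, by simp⟩
  | empty => exact ⟨∅, Set.finite_empty, Set.empty_subset _, Set.empty_subset _⟩
  | union _ _ ihA ihB =>
    obtain ⟨s, hs, hs𝒟, hAs⟩ := ihA
    obtain ⟨t, ht, ht𝒟, hBt⟩ := ihB
    refine ⟨s ∪ t, hs.union ht, Set.union_subset hs𝒟 ht𝒟, ?_⟩
    rw [Set.sUnion_union]
    exact Set.union_subset_union hAs hBt
  | inter _ _ ihA =>
    obtain ⟨s, hs, hs𝒟, hAs⟩ := ihA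
    exact ⟨s, hs, hs𝒟, Set.inter_subset_left.trans hAs⟩
  | sdiff _ _ ihA =>
    obtain ⟨s, hs, hs𝒟, hAs⟩ := ihA
    exact ⟨s, hs, hs𝒟, Set.sdiff_subset.trans hAs⟩

theorem IsOrderedType.exists_superset_or_eq_sUnion (hot : IsOrderedType 𝒟)
    {s : Set (Set α)} (hs𝒟 : s ⊆ 𝒟) {D : Set α} (hD : D ∈ 𝒟) (hDs : D ⊆ ⋃₀ s) :
    (∃ E ∈ s, D ⊆ E) ∨ D = ⋃₀ {E ∈ s | E ⊆ D} := by
  refine or_iff_not_imp_left.2 fun hnot => ?_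
  refine (Set.sUnion_subset fun E hE => hE.2).antisymm' fun x hx => ?_
  obtain ⟨E, hEs, hxE⟩ := hDs hx
  rcases hot D hD E (hs𝒟 hEs) with hDE | hED | hempty
  · exact absurd ⟨E, hEs, Set.inter_eq_left.1 hDE⟩ hnot
  · exact ⟨E, ⟨hEs, Set.inter_eq_right.1 hED⟩, hxE⟩
  · exact absurd (hempty ▸ ⟨hx, hxE⟩ : x ∈ (∅ : Set α)) (Set.notMem_empty x)

theorem IsOrderedType.bddBelow_levels_of_subset_sUnion {Γ : Type*} [LinearOrder Γ]
    (hot : IsOrderedType 𝒟) {lv : Set α → Γ}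
    (hlv : ∀ D' ∈ 𝒟, ∀ D ∈ 𝒟, D' ⊆ D → lv D ≤ lv D')
    {s : Set (Set α)} (hs : s.Finite) (hs𝒟 : s ⊆ 𝒟) :
    BddBelow {ε | ∃ D ∈ 𝒟, D ⊆ ⋃₀ s ∧ lv D = ε} := by
  have : Nonempty Γ := ⟨lv ∅⟩
  have hsub : {ε | ∃ D ∈ 𝒟, D ⊆ ⋃₀ s ∧ lv D = ε} ⊆
      (⋃ E ∈ s, Set.Ici (lv E)) ∪ (fun t => lv (⋃₀ t)) '' 𝒫 s := by
    rintro _ ⟨D, hD, hDs, rfl⟩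
    rcases hot.exists_superset_or_eq_sUnion hs𝒟 hD hDs with ⟨E, hEs, hDE⟩ | hDeq
    · exact Or.inl (Set.mem_biUnion hEs (hlv D hD E (hs𝒟 hEs) hDE))
    · exact Or.inr ⟨_, fun E hE => hE.1, congrArg lv hDeq.symm⟩
  refine BddBelow.mono hsub (bddBelow_union.2 ⟨?_, (hs.powerset.image _).bddBelow⟩)
  exact (hs.bddBelow_biUnion).2 fun _ _ => bddBelow_Ici

end

theorem ddd_levels_bddBelow_general
    {G : Type*}
    {Γ : Type*} [LinearOrder Γ]
    (𝒟 : Set (Set G)) (lv : Set G → Γ)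
    (hot : IsOrderedType 𝒟)
    (hlv_mono : ∀ D' ∈ 𝒟, ∀ D ∈ 𝒟, D' ⊆ D → lv D ≤ lv D') :
    ∀ C : Set G, IsDDD 𝒟 C → BddBelow {ε | ∃ D ∈ 𝒟, D ⊆ C ∧ lv D = ε} := by
  intro C hC
  obtain ⟨s, hs, hs𝒟, hCs⟩ := hC.exists_finite_subset_sUnion
  refine (hot.bddBelow_levels_of_subset_sUnion hlv_mono hs hs𝒟).mono ?_
  rintro _ ⟨D, hD, hDC, rfl⟩
  exact ⟨D, hD, hDC.trans hCs, rfl⟩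

/-- If `G` is Hausdorff and of ordered type then the set of levels of distinguished
subsets of any ddd-set is bounded below: every ddd-set has a level or is of type `E`. -/
theorem ddd_levels_bddBelow
    {G : Type*} [Group G] [TopologicalSpace G] [T2Space G]
    {Γ : Type*} [LinearOrder Γ] [Nonempty Γ]
    (𝒟 : Set (Set G)) (lv : Set G → Γ)
    (h𝒟ne : ∀ D ∈ 𝒟, (D : Set G).Nonempty)
    (h𝒟tr : ∀ (g : G), ∀ D ∈ 𝒟, g • D ∈ 𝒟)
    (hbasis : TopologicalSpace.IsTopologicalBasis 𝒟)
    (hot : IsOrderedType 𝒟)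
    (hlv_inv : ∀ (g : G), ∀ D ∈ 𝒟, lv (g • D) = lv D)
    (hlv_mono : ∀ D' ∈ 𝒟, ∀ D ∈ 𝒟, D' ⊆ D → lv D ≤ lv D') :
    ∀ C : Set G, IsDDD 𝒟 C → BddBelow {ε | ∃ D ∈ 𝒟, D ⊆ C ∧ lv D = ε} :=
  ddd_levels_bddBelow_general 𝒟 lv hot hlv_mono
end

section
/- Let G be a group of ordered type with respect to 𝒟, and let D₁ ⊆ D₂ ⊆ D₃ with D₁, D₂, D₃ ∈ 𝒟. If D₁ has finite index in D₃, then D₂ has finite index in D₃ and D₁ has finite index in D₂, and moreover |D₃ : D₁| = |D₃ : D₂| · |D₂ : D₁|. -/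
open Pointwise

/-- `D₁` has finite index in `D₂`: finitely many left translates of `D₁` cover `D₂`. -/
def HasFinIndexIn {G : Type*} [Group G] (D₁ D₂ : Set G) : Prop :=
  ∃ T : Finset G, D₂ ⊆ ⋃ g ∈ T, g • D₁

/-- The index `|D₂ : D₁|`: the minimal cardinality of a finite set of left translates
of `D₁` covering `D₂`. -/
noncomputable def indexIn {G : Type*} [Group G] (D₂ D₁ : Set G) : ℕ :=
  sInf {n | ∃ T : Finset G, T.card = n ∧ D₂ ⊆ ⋃ g ∈ T, g • D₁}

/-!
Composing covers gives `|D₃ : D₁| ≤ |D₃ : D₂| * |D₂ : D₁|` for arbitrary subsets of a group.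
For the converse, take a minimal cover of `D₃` by translates `g • D₁` that all meet `D₃`.
Each `g • D₂` then meets `D₃`, so it either contains `D₃` (and `|D₃ : D₂| ≤ 1`) or lies in
`D₃`. In the second case the maximal sets among the `g • D₂` are pairwise disjoint and cover
`D₃`, so there are at least `|D₃ : D₂|` of them; sending each `g` to a maximal set above
`g • D₂` sorts the cover into fibres, and the fibre over `c • D₂` covers it, hence has at least
`|D₂ : D₁|` elements.
-/

namespace IsOrderedType

variable {α : Type*} {𝒟 : Set (Set α)}

theorem mono (h𝒟 : IsOrderedType 𝒟) {𝒞 : Set (Set α)} (h𝒞 : 𝒞 ⊆ 𝒟) : IsOrderedType 𝒞 :=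
  fun D hD D' hD' => h𝒟 D (h𝒞 hD) D' (h𝒞 hD')

theorem subset_or_subset_of_inter_nonempty_s10 (h𝒟 : IsOrderedType 𝒟) {D D' : Set α}
    (hD : D ∈ 𝒟) (hD' : D' ∈ 𝒟) (hne : (D ∩ D').Nonempty) : D ⊆ D' ∨ D' ⊆ D := by
  rcases h𝒟 D hD D' hD' with h | h | h
  · exact .inl (Set.inter_eq_left.1 h)
  · exact .inr (Set.inter_eq_right.1 h)
  · exact absurd h hne.ne_empty

theorem exists_pairwiseDisjoint_forall_subset {F : Finset (Set α)}
    (hF : IsOrderedType (F : Set (Set α))) :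
    ∃ M ⊆ F, (M : Set (Set α)).PairwiseDisjoint id ∧ ∀ E ∈ F, ∃ E' ∈ M, E ⊆ E' := by
  classical
  refine ⟨F.filter (Maximal (· ∈ F)), Finset.filter_subset _ _, ?_, ?_⟩
  · intro E hE E' hE' hne
    simp only [Finset.coe_filter] at hE hE'
    rw [Function.onFun, id, id, Set.disjoint_iff_inter_eq_empty]
    by_contra hmeet
    rcases hF.subset_or_subset_of_inter_nonempty_s10 hE.1 hE'.1
      (Set.nonempty_iff_ne_empty.2 hmeet) with h | h
    · exact hne (le_antisymm h (hE.2.2 hE'.1 h))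
    · exact hne (le_antisymm (hE'.2.2 hE.1 h) h)
  · intro E hE
    obtain ⟨E', hEE', hmax⟩ := F.finite_toSet.exists_le_maximal hE
    exact ⟨E', Finset.mem_filter.2 ⟨hmax.prop, hmax⟩, hEE'⟩

end IsOrderedType

section Index

variable {G : Type*} [Group G]

theorem indexIn_le_card {D D' : Set G} {T : Finset G} (h : D ⊆ ⋃ g ∈ T, g • D') :
    indexIn D D' ≤ T.card :=
  Nat.sInf_le ⟨T, rfl, h⟩

theorem HasFinIndexIn.exists_card_eq_indexIn {D D' : Set G} (h : HasFinIndexIn D' D) :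
    ∃ T : Finset G, T.card = indexIn D D' ∧ D ⊆ ⋃ g ∈ T, g • D' := by
  obtain ⟨T, hT⟩ := h
  exact Nat.sInf_mem (s := {n | ∃ T : Finset G, T.card = n ∧ D ⊆ ⋃ g ∈ T, g • D'})
    ⟨T.card, T, rfl, hT⟩

theorem HasFinIndexIn.mono {D₁ D₂ D₁' D₂' : Set G} (h : HasFinIndexIn D₁ D₂) (h₁ : D₁ ⊆ D₁')
    (h₂ : D₂' ⊆ D₂) : HasFinIndexIn D₁' D₂' :=
  let ⟨T, hT⟩ := h
  ⟨T, h₂.trans <| hT.trans <| Set.biUnion_mono subset_rfl fun _ _ => Set.smul_set_mono h₁⟩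

theorem indexIn_le_card_of_smul_subset {D D' : Set G} {T : Finset G} (c : G)
    (h : c • D ⊆ ⋃ g ∈ T, g • D') : indexIn D D' ≤ T.card := by
  classical
  rw [← Finset.card_smul_finset c⁻¹ T]
  refine indexIn_le_card fun x hx => ?_
  obtain ⟨g, hg, hcx⟩ := Set.mem_iUnion₂.1 (h (Set.smul_mem_smul_set hx))
  refine Set.mem_iUnion₂.2 ⟨c⁻¹ • g, Finset.smul_mem_smul_finset hg, ?_⟩
  rw [Set.mem_smul_set_iff_inv_smul_mem] at hcx ⊢
  simpa [mul_smul, mul_assoc] using hcx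

theorem subset_biUnion_mul_smul [DecidableEq G] {D₁ D₂ D₃ : Set G} {A B : Finset G}
    (hA : D₃ ⊆ ⋃ a ∈ A, a • D₂) (hB : D₂ ⊆ ⋃ b ∈ B, b • D₁) :
    D₃ ⊆ ⋃ g ∈ A * B, g • D₁ := by
  intro x hx
  obtain ⟨a, ha, hxa⟩ := Set.mem_iUnion₂.1 (hA hx)
  rw [Set.mem_smul_set_iff_inv_smul_mem] at hxa
  obtain ⟨b, hb, hxb⟩ := Set.mem_iUnion₂.1 (hB hxa)
  refine Set.mem_iUnion₂.2 ⟨a * b, Finset.mul_mem_mul ha hb, ?_⟩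
  rw [Set.mem_smul_set_iff_inv_smul_mem] at hxb ⊢
  rwa [mul_inv_rev, mul_smul]

theorem indexIn_le_mul {D₁ D₂ D₃ : Set G} (h₃₂ : HasFinIndexIn D₂ D₃)
    (h₂₁ : HasFinIndexIn D₁ D₂) : indexIn D₃ D₁ ≤ indexIn D₃ D₂ * indexIn D₂ D₁ := by
  classical
  obtain ⟨A, hAcard, hA⟩ := h₃₂.exists_card_eq_indexIn
  obtain ⟨B, hBcard, hB⟩ := h₂₁.exists_card_eq_indexIn
  calc indexIn D₃ D₁ ≤ (A * B).card := indexIn_le_card (subset_biUnion_mul_smul hA hB)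
    _ ≤ A.card * B.card := Finset.card_mul_le
    _ = _ := by rw [hAcard, hBcard]

theorem indexIn_le_card_of_subset_biUnion {D D' : Set G} {M : Finset (Set G)}
    (h : D ⊆ ⋃ E ∈ M, E) (hM : ∀ E ∈ M, ∃ c : G, c • D' = E) : indexIn D D' ≤ M.card := by
  classical
  choose! rep hrep using hM
  refine (indexIn_le_card (T := M.image rep) fun x hx => ?_).trans Finset.card_image_le
  obtain ⟨E, hE, hxE⟩ := Set.mem_iUnion₂.1 (h hx)
  exact Set.mem_iUnion₂.2 ⟨rep E, Finset.mem_image_of_mem rep hE, (hrep E hE).symm ▸ hxE⟩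

theorem exists_subset_subset_biUnion_inter_nonempty {D D' : Set G} {T : Finset G}
    (h : D ⊆ ⋃ g ∈ T, g • D') :
    ∃ T' ⊆ T, (D ⊆ ⋃ g ∈ T', g • D') ∧ ∀ g ∈ T', (g • D' ∩ D).Nonempty := by
  classical
  refine ⟨T.filter fun g => (g • D' ∩ D).Nonempty, Finset.filter_subset _ _,
    fun x hx => ?_, fun g hg => (Finset.mem_filter.1 hg).2⟩
  obtain ⟨g, hg, hxg⟩ := Set.mem_iUnion₂.1 (h hx)
  exact Set.mem_iUnion₂.2 ⟨g, Finset.mem_filter.2 ⟨hg, x, hxg, hx⟩, hxg⟩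

variable {𝒟 : Set (Set G)} {D₁ D₂ D₃ : Set G}

theorem mul_indexIn_le_card_of_forall_smul_subset (h𝒟 : IsOrderedType 𝒟)
    (htr : ∀ g : G, ∀ D ∈ 𝒟, g • D ∈ 𝒟) (hD₂ : D₂ ∈ 𝒟) (h12 : D₁ ⊆ D₂) {T : Finset G}
    (hT : D₃ ⊆ ⋃ g ∈ T, g • D₁) (hsub : ∀ g ∈ T, g • D₂ ⊆ D₃) :
    indexIn D₃ D₂ * indexIn D₂ D₁ ≤ T.card := by
  classical
  have hF : ((T.image (· • D₂) : Finset (Set G)) : Set (Set G)) ⊆ 𝒟 := by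
    intro E hE
    obtain ⟨g, -, rfl⟩ := Finset.mem_image.1 hE
    exact htr g D₂ hD₂
  obtain ⟨M, hMF, hMdisj, hMtop⟩ := (h𝒟.mono hF).exists_pairwiseDisjoint_forall_subset
  have hM : ∀ E ∈ M, ∃ c ∈ T, c • D₂ = E := fun E hE => Finset.mem_image.1 (hMF hE)
  choose! φ hφM hφ using fun g (hg : g ∈ T) => hMtop (g • D₂) (Finset.mem_image_of_mem _ hg)
  have hD₁φ : ∀ g ∈ T, g • D₁ ⊆ φ g := fun g hg => (Set.smul_set_mono h12).trans (hφ g hg)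
  have hcover : D₃ ⊆ ⋃ E ∈ M, E := fun x hx => by
    obtain ⟨g, hg, hxg⟩ := Set.mem_iUnion₂.1 (hT hx)
    exact Set.mem_iUnion₂.2 ⟨φ g, hφM g hg, hD₁φ g hg hxg⟩
  have hfiber : ∀ E ∈ M, indexIn D₂ D₁ ≤ (T.filter (φ · = E)).card := by
    intro E hE
    obtain ⟨c, hc, rfl⟩ := hM E hE
    refine indexIn_le_card_of_smul_subset c fun x hx => ?_
    obtain ⟨g, hg, hxg⟩ := Set.mem_iUnion₂.1 (hT (hsub c hc hx))
    have hφg : φ g = c • D₂ :=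
      hMdisj.elim (hφM g hg) hE (Set.not_disjoint_iff.2 ⟨x, hD₁φ g hg hxg, hx⟩)
    exact Set.mem_iUnion₂.2 ⟨g, Finset.mem_filter.2 ⟨hg, hφg⟩, hxg⟩
  have hm : indexIn D₃ D₂ ≤ M.card :=
    indexIn_le_card_of_subset_biUnion hcover fun E hE =>
      let ⟨c, _, hc⟩ := hM E hE
      ⟨c, hc⟩
  calc indexIn D₃ D₂ * indexIn D₂ D₁ ≤ M.card * indexIn D₂ D₁ := Nat.mul_le_mul_right _ hm
    _ ≤ ∑ E ∈ M, (T.filter (φ · = E)).card := by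
      simpa using Finset.card_nsmul_le_sum M _ _ hfiber
    _ = T.card := (Finset.card_eq_sum_card_fiberwise hφM).symm

theorem mul_indexIn_le_indexIn (h𝒟 : IsOrderedType 𝒟) (htr : ∀ g : G, ∀ D ∈ 𝒟, g • D ∈ 𝒟)
    (hD₂ : D₂ ∈ 𝒟) (hD₃ : D₃ ∈ 𝒟) (h12 : D₁ ⊆ D₂) (h23 : D₂ ⊆ D₃)
    (hfin : HasFinIndexIn D₁ D₃) : indexIn D₃ D₂ * indexIn D₂ D₁ ≤ indexIn D₃ D₁ := by
  obtain ⟨T, hTcard, hT⟩ := hfin.exists_card_eq_indexIn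
  obtain ⟨T', hT'T, hT', hmeet⟩ := exists_subset_subset_biUnion_inter_nonempty hT
  rw [← hTcard]
  refine le_trans ?_ (Finset.card_le_card hT'T)
  have hcmp : ∀ g ∈ T', g • D₂ ⊆ D₃ ∨ D₃ ⊆ g • D₂ := fun g hg =>
    h𝒟.subset_or_subset_of_inter_nonempty_s10 (htr g D₂ hD₂) hD₃
      ((hmeet g hg).mono (Set.inter_subset_inter_left _ (Set.smul_set_mono h12)))
  by_cases hbig : ∃ g ∈ T', D₃ ⊆ g • D₂
  · obtain ⟨g, -, hg⟩ := hbig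
    have hm : indexIn D₃ D₂ ≤ 1 := by
      simpa using indexIn_le_card (T := {g}) (by simpa using hg)
    calc indexIn D₃ D₂ * indexIn D₂ D₁ ≤ 1 * T'.card :=
          Nat.mul_le_mul hm (indexIn_le_card (h23.trans hT'))
      _ = T'.card := one_mul _
  · push Not at hbig
    exact mul_indexIn_le_card_of_forall_smul_subset h𝒟 htr hD₂ h12 hT' fun g hg =>
      (hcmp g hg).resolve_right (hbig g hg)

end Index

theorem index_tower_law_of_orderedType_general
    {G : Type*} [Group G]
    (𝒟 : Set (Set G))
    (h𝒟tr : ∀ (g : G), ∀ D ∈ 𝒟, g • D ∈ 𝒟)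
    (hot : IsOrderedType 𝒟)
    {D₁ D₂ D₃ : Set G} (hD₂ : D₂ ∈ 𝒟) (hD₃ : D₃ ∈ 𝒟)
    (h12 : D₁ ⊆ D₂) (h23 : D₂ ⊆ D₃)
    (hfin : HasFinIndexIn D₁ D₃) :
    HasFinIndexIn D₂ D₃ ∧ HasFinIndexIn D₁ D₂ ∧
      indexIn D₃ D₁ = indexIn D₃ D₂ * indexIn D₂ D₁ := by
  have h₃₂ : HasFinIndexIn D₂ D₃ := hfin.mono h12 subset_rfl
  have h₂₁ : HasFinIndexIn D₁ D₂ := hfin.mono subset_rfl h23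
  exact ⟨h₃₂, h₂₁, le_antisymm (indexIn_le_mul h₃₂ h₂₁)
    (mul_indexIn_le_indexIn hot h𝒟tr hD₂ hD₃ h12 h23 hfin)⟩

/-- Multiplicative tower law for indices of distinguished sets in a group of ordered
type: for `D₁ ⊆ D₂ ⊆ D₃` in `𝒟`, if `|D₃ : D₁|` is finite then so are `|D₃ : D₂|` and
`|D₂ : D₁|`, and `|D₃ : D₁| = |D₃ : D₂| ⬝ |D₂ : D₁|`. -/
theorem index_tower_law_of_orderedType
    {G : Type*} [Group G]
    (𝒟 : Set (Set G))
    (h𝒟ne : ∀ D ∈ 𝒟, (D : Set G).Nonempty)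
    (h𝒟tr : ∀ (g : G), ∀ D ∈ 𝒟, g • D ∈ 𝒟)
    (hot : IsOrderedType 𝒟)
    {D₁ D₂ D₃ : Set G} (hD₁ : D₁ ∈ 𝒟) (hD₂ : D₂ ∈ 𝒟) (hD₃ : D₃ ∈ 𝒟)
    (h12 : D₁ ⊆ D₂) (h23 : D₂ ⊆ D₃)
    (hfin : HasFinIndexIn D₁ D₃) :
    HasFinIndexIn D₂ D₃ ∧ HasFinIndexIn D₁ D₂ ∧
      indexIn D₃ D₁ = indexIn D₃ D₂ * indexIn D₂ D₁ :=
  index_tower_law_of_orderedType_general 𝒟 h𝒟tr hot hD₂ hD₃ h12 h23 hfin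
end

section
/- Let G be a group of ordered type with respect to 𝒟. If D ∈ 𝒟 is the union of finitely many pairwise disjoint sets D₁, …, D_n ∈ 𝒟, then at least one of the indices |D : D_r| (1 ≤ r ≤ n) is finite. -/
/-! Any two distinguished sets meet after translating one of them so that they share a point, and
then, by the ordered-type condition, one contains the other. So "fits inside a translate of" is a
total preorder on `D₁, …, D_n`; a greatest element `D_m` has translates containing every `D_r`,
and finitely many of those translates cover `D = ⋃ r, D_r`. -/

open Pointwise

section

variable {G : Type*} [Group G]

def IsSubsetTranslate (A B : Set G) : Prop :=
  ∃ g : G, A ⊆ g • B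

lemma IsSubsetTranslate.refl (A : Set G) : IsSubsetTranslate A A :=
  ⟨1, (one_smul G A).superset⟩

instance : IsTrans (Set G) IsSubsetTranslate where
  trans _ _ _ := fun ⟨g, hAB⟩ ⟨h, hBC⟩ =>
    ⟨g * h, hAB.trans <| by simpa only [smul_smul] using Set.smul_set_mono (a := g) hBC⟩

lemma isSubsetTranslate_total_of_isOrderedType {𝒟 : Set (Set G)}
    (h𝒟ne : ∀ D ∈ 𝒟, D.Nonempty) (h𝒟tr : ∀ (g : G), ∀ D ∈ 𝒟, g • D ∈ 𝒟)
    (hot : IsOrderedType 𝒟) {A B : Set G} (hA : A ∈ 𝒟) (hB : B ∈ 𝒟) :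
    IsSubsetTranslate A B ∨ IsSubsetTranslate B A := by
  obtain ⟨a, ha⟩ := h𝒟ne A hA
  obtain ⟨b, hb⟩ := h𝒟ne B hB
  set g := b * a⁻¹
  have hb_mem : b ∈ g • A := ⟨a, ha, by simp [g]⟩
  rcases hot _ (h𝒟tr g A hA) B hB with h | h | h
  · left
    refine ⟨g⁻¹, ?_⟩
    rw [Set.subset_smul_set_iff, inv_inv, ← h]
    exact Set.inter_subset_right
  · exact Or.inr ⟨g, h ▸ Set.inter_subset_left⟩
  · exact absurd h (Set.nonempty_iff_ne_empty.1 ⟨b, hb_mem, hb⟩)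

lemma hasFinIndexIn_of_subset_iUnion {ι : Type*} [Finite ι] {A : ι → Set G} {B D : Set G}
    (hcover : D ⊆ ⋃ i, A i) (hA : ∀ i, IsSubsetTranslate (A i) B) : HasFinIndexIn B D := by
  classical
  have := Fintype.ofFinite ι
  choose g hg using hA
  refine ⟨Finset.univ.image g, hcover.trans <| Set.iUnion_subset fun i => ?_⟩
  exact (hg i).trans <| Set.subset_biUnion_of_mem (u := (· • B)) <|
    Finset.mem_coe.2 <| Finset.mem_image_of_mem g (Finset.mem_univ i)

end

theorem exists_finite_index_of_disjoint_union_general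
    {G : Type*} [Group G]
    (𝒟 : Set (Set G))
    (h𝒟ne : ∀ D ∈ 𝒟, (D : Set G).Nonempty)
    (h𝒟tr : ∀ (g : G), ∀ D ∈ 𝒟, g • D ∈ 𝒟)
    (hot : IsOrderedType 𝒟)
    {D : Set G} (hD : D ∈ 𝒟)
    {n : ℕ} (Dr : Fin n → Set G) (hDr : ∀ r, Dr r ∈ 𝒟)
    (hunion : D = ⋃ r, Dr r) :
    ∃ r, HasFinIndexIn (Dr r) D := by
  have : Nonempty (Fin n) := by
    obtain ⟨d, hd⟩ := h𝒟ne D hD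
    rw [hunion, Set.mem_iUnion] at hd
    obtain ⟨r, -⟩ := hd
    exact ⟨r⟩
  have hdir : Directed IsSubsetTranslate Dr := fun r s =>
    (isSubsetTranslate_total_of_isOrderedType h𝒟ne h𝒟tr hot (hDr r) (hDr s)).elim
      (fun h => ⟨s, h, .refl _⟩) (fun h => ⟨r, .refl _, h⟩)
  obtain ⟨m, hm⟩ := hdir.finite_le id
  exact ⟨m, hasFinIndexIn_of_subset_iUnion hunion.subset hm⟩

/-- If `G` is of ordered type and `D ∈ 𝒟` is a finite disjoint union of members
`D₁, …, D_n` of `𝒟`, then at least one index `|D : D_r|` is finite. -/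
theorem exists_finite_index_of_disjoint_union
    {G : Type*} [Group G]
    (𝒟 : Set (Set G))
    (h𝒟ne : ∀ D ∈ 𝒟, (D : Set G).Nonempty)
    (h𝒟tr : ∀ (g : G), ∀ D ∈ 𝒟, g • D ∈ 𝒟)
    (hot : IsOrderedType 𝒟)
    {D : Set G} (hD : D ∈ 𝒟)
    {n : ℕ} (Dr : Fin n → Set G) (hDr : ∀ r, Dr r ∈ 𝒟)
    (hdisj : Pairwise (Function.onFun Disjoint Dr))
    (hunion : D = ⋃ r, Dr r) :
    ∃ r, HasFinIndexIn (Dr r) D :=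
  exists_finite_index_of_disjoint_union_general 𝒟 h𝒟ne h𝒟tr hot hD Dr hDr hunion
end

section
/- Let φ : G → Q be a group homomorphism with kernel N, and let A ⊆ B be subgroups of G. Then the left coset space B/A is in bijection with the product ((N ∩ B)/(N ∩ A)) × (φ(B)/φ(A)) of left coset spaces; in particular, as cardinals, the index [B : A] equals [N ∩ B : N ∩ A] · [φ(B) : φ(A)], and [B : A] is finite if and only if both [N ∩ B : N ∩ A] and [φ(B) : φ(A)] are finite. -/
universe u

/-! Restricting `φ` to `B` gives a surjection `B → φ(B)` with kernel `N ⊓ B`, normal in `B`.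
Factoring `A ≤ A(N ⊓ B) ≤ B`, the top layer `B / A(N ⊓ B)` is carried bijectively onto
`φ(B)/φ(A)`, since `A(N ⊓ B)` is the preimage of `φ(A)`; the bottom layer `A(N ⊓ B)/A` is
`(N ⊓ B)/(N ⊓ A)`, as every coset of `A` in `A(N ⊓ B) = (N ⊓ B)A` meets `N ⊓ B`. -/

namespace Subgroup

variable {Γ Δ : Type*} [Group Γ] [Group Δ]

noncomputable def quotientComapEquivOfSurjective (f : Γ →* Δ) (hf : Function.Surjective f)
    (T : Subgroup Δ) : Γ ⧸ T.comap f ≃ Δ ⧸ T :=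
  have rel_iff (a b : Γ) : a⁻¹ * b ∈ T.comap f ↔ (f a)⁻¹ * f b ∈ T := by simp
  Equiv.ofBijective
    (Quotient.map' f fun a b h => QuotientGroup.leftRel_apply.mpr <|
      (rel_iff a b).mp (QuotientGroup.leftRel_apply.mp h))
    ⟨Quotient.ind₂' fun a b h => QuotientGroup.eq.mpr <| (rel_iff a b).mpr <|
        QuotientGroup.eq.mp h,
      .of_comp (g := ((↑) : Γ → Γ ⧸ T.comap f)) (QuotientGroup.mk_surjective.comp hf)⟩

noncomputable def quotientSubgroupOfEquivOfNormal (N H : Subgroup Γ) [N.Normal] :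
    N ⧸ H.subgroupOf N ≃ ↥(N ⊔ H) ⧸ H.subgroupOf (N ⊔ H) :=
  Equiv.ofBijective (quotientSubgroupOfEmbeddingOfLE H le_sup_left)
    ⟨(quotientSubgroupOfEmbeddingOfLE H le_sup_left).injective, by
      rintro ⟨x, hx⟩
      obtain ⟨n, hn, h, hh, rfl⟩ := mem_sup_of_normal_left.mp hx
      refine ⟨QuotientGroup.mk ⟨n, hn⟩, QuotientGroup.eq.mpr ?_⟩
      simpa [mem_subgroupOf] using hh⟩

noncomputable def quotientEquivKerProdQuotientMap (ψ : Γ →* Δ) (hψ : Function.Surjective ψ)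
    (S : Subgroup Γ) : Γ ⧸ S ≃ (ψ.ker ⧸ S.subgroupOf ψ.ker) × (Δ ⧸ S.map ψ) :=
  (quotientEquivProdOfLE (le_sup_right : S ≤ ψ.ker ⊔ S)).trans <|
    (Equiv.prodComm _ _).trans <| Equiv.prodCongr (quotientSubgroupOfEquivOfNormal _ S).symm <|
      (quotientEquivOfEq (by rw [comap_map_eq, sup_comm])).trans
        (quotientComapEquivOfSurjective ψ hψ (S.map ψ))

end Subgroup

namespace MonoidHom

open Subgroup

variable {G Q : Type*} [Group G] [Group Q] (f : G →* Q)

def kerSubgroupMapEquiv (B : Subgroup G) : (f.subgroupMap B).ker ≃* ↥(f.ker ⊓ B) where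
  toFun x := ⟨x.1, Subtype.ext_iff.mp x.2, x.1.2⟩
  invFun y := ⟨⟨y, y.2.2⟩, Subtype.ext y.2.1⟩
  map_mul' _ _ := rfl

theorem comap_kerSubgroupMapEquiv_inf_subgroupOf (A B : Subgroup G) :
    ((f.ker ⊓ A).subgroupOf (f.ker ⊓ B)).comap (f.kerSubgroupMapEquiv B).toMonoidHom =
      (A.subgroupOf B).subgroupOf (f.subgroupMap B).ker := by
  ext x
  have hx : f x = 1 := Subtype.ext_iff.mp x.2
  simp [mem_subgroupOf, kerSubgroupMapEquiv, hx]

theorem map_subgroupMap_subgroupOf {A B : Subgroup G} (hAB : A ≤ B) :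
    (A.subgroupOf B).map (f.subgroupMap B) = (A.map f).subgroupOf (B.map f) := by
  ext ⟨y, hy⟩
  simp only [mem_map, mem_subgroupOf]
  constructor
  · rintro ⟨x, hxA, hxy⟩
    exact ⟨x, hxA, Subtype.ext_iff.mp hxy⟩
  · rintro ⟨x, hxA, rfl⟩
    exact ⟨⟨x, hAB hxA⟩, hxA, rfl⟩

noncomputable def quotientKerSubgroupMapEquiv (A B : Subgroup G) :
    (f.subgroupMap B).ker ⧸ (A.subgroupOf B).subgroupOf (f.subgroupMap B).ker ≃
      ↥(f.ker ⊓ B) ⧸ (f.ker ⊓ A).subgroupOf (f.ker ⊓ B) :=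
  (quotientEquivOfEq (f.comap_kerSubgroupMapEquiv_inf_subgroupOf A B).symm).trans <|
    quotientComapEquivOfSurjective _ (f.kerSubgroupMapEquiv B).surjective _

end MonoidHom

/-- Index identity behind Lemma 5.4: for a homomorphism `φ : G → Q` with kernel `N` and
subgroups `A ≤ B` of `G`, the coset space `B/A` is in bijection with
`((N ∩ B)/(N ∩ A)) × (φ(B)/φ(A))`; in particular the cardinal identity
`[B : A] = [N ∩ B : N ∩ A] ⬝ [φ(B) : φ(A)]` holds and `[B : A]` is finite iff both
factors are. -/
theorem coset_space_equiv_ker_prod_image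
    {G Q : Type u} [Group G] [Group Q] (φ : G →* Q)
    (A B : Subgroup G) (hAB : A ≤ B) :
    Nonempty ((B ⧸ A.subgroupOf B) ≃
      ((↥(φ.ker ⊓ B) ⧸ (φ.ker ⊓ A).subgroupOf (φ.ker ⊓ B)) ×
        (↥(B.map φ) ⧸ (A.map φ).subgroupOf (B.map φ)))) ∧
    Cardinal.mk (B ⧸ A.subgroupOf B) =
      Cardinal.mk (↥(φ.ker ⊓ B) ⧸ (φ.ker ⊓ A).subgroupOf (φ.ker ⊓ B)) *
        Cardinal.mk (↥(B.map φ) ⧸ (A.map φ).subgroupOf (B.map φ)) ∧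
    (Finite (B ⧸ A.subgroupOf B) ↔
      (Finite (↥(φ.ker ⊓ B) ⧸ (φ.ker ⊓ A).subgroupOf (φ.ker ⊓ B)) ∧
        Finite (↥(B.map φ) ⧸ (A.map φ).subgroupOf (B.map φ)))) := by
  let e := (Subgroup.quotientEquivKerProdQuotientMap (φ.subgroupMap B) (φ.subgroupMap_surjective B)
    (A.subgroupOf B)).trans <| Equiv.prodCongr (φ.quotientKerSubgroupMapEquiv A B)
      (Subgroup.quotientEquivOfEq (φ.map_subgroupMap_subgroupOf hAB))
  refine ⟨⟨e⟩, ?_, ?_⟩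
  · rw [Cardinal.mk_congr e, Cardinal.mk_prod, Cardinal.lift_id, Cardinal.lift_id]
  · rw [e.finite_iff, Prod.finite_iff]
end
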